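/- Let k ≥ 4 be an integer and let z satisfy δ_k < z < r_k, where δ_k = arsinh(cot(2π/k)) and r_k = arsinh(cot(π/k)). Then the Lebesgue double integral of (x − y)^{−2} over the plane region Ω* = {(x,y) ∈ ℝ² : 0 < x < tan(π/k), −1/x ≤ y < −tan(π/k), and D(x,y) ≤ z} equals sinh z · arctan(φ_k(sinh z)) + log(2·cosh z·sin(π/k)·cos(π/k)), where φ_k(t) = (1 − t·tan(π/k))/(t + tan(π/k)). -/

import Mathlib

set_option maxHeartbeats 1000000

open Real MeasureTheory

/-- The geodesic of the upper half-plane with endpoints `x` and `y` at infinity: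
the Euclidean semicircle with center `(x+y)/2` and radius `|x-y|/2`. -/
def geodesicUHP (x y : ℝ) : Set UpperHalfPlane :=
  {w : UpperHalfPlane | ‖(w : ℂ) - (((x + y) / 2 : ℝ) : ℂ)‖ = |x - y| / 2}

/-- The hyperbolic distance from the point `i` of the upper half-plane to the geodesic
with endpoints `x`, `y` at infinity. -/
noncomputable def D (x y : ℝ) : ℝ :=
  Metric.infDist UpperHalfPlane.I (geodesicUHP x y)

lemma mem_geodesicUHP_iff (x y : ℝ) (w : UpperHalfPlane) :
    w ∈ geodesicUHP x y ↔ (w.re - (x + y) / 2) ^ 2 + w.im ^ 2 = ((x - y) / 2) ^ 2 := by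
  simp only [geodesicUHP, Set.mem_setOf_eq]
  have h0 : (0:ℝ) ≤ ‖(w : ℂ) - (((x + y) / 2 : ℝ) : ℂ)‖ := norm_nonneg _
  have h1 : (0:ℝ) ≤ |x - y| / 2 := by positivity
  rw [← sq_eq_sq₀ h0 h1, Complex.sq_norm, Complex.normSq_apply]
  simp only [Complex.sub_re, Complex.ofReal_re, Complex.sub_im, Complex.ofReal_im,
    UpperHalfPlane.coe_re, UpperHalfPlane.coe_im, sub_zero]
  rw [div_pow, sq_abs, ← div_pow]
  constructor <;> intro h <;> linear_combination h

lemma D_eq (x y : ℝ) (hx : 0 < x) (hy : y < 0) (h1 : 0 ≤ 1 + x * y) :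
    D x y = Real.arsinh ((1 + x * y) / (x - y)) := by
  have hxy : 0 < x - y := by linarith
  set s₀ : ℝ := (1 + x * y) / (x - y) with hs₀def
  have hs₀0 : 0 ≤ s₀ := div_nonneg h1 hxy.le
  have hd₀ : 0 ≤ Real.arsinh s₀ := Real.arsinh_nonneg_iff.mpr hs₀0
  set T : ℝ := Real.sqrt ((x ^ 2 + 1) * (y ^ 2 + 1)) with hTdef
  have hT2 : T ^ 2 = (x ^ 2 + 1) * (y ^ 2 + 1) := Real.sq_sqrt (by positivity)
  have hTpos : 0 < T := Real.sqrt_pos.mpr (by positivity)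
  have hcosh₀ : Real.cosh (Real.arsinh s₀) = T / (x - y) := by
    rw [Real.cosh_arsinh]
    have h2 : 1 + s₀ ^ 2 = (T / (x - y)) ^ 2 := by
      rw [hs₀def, div_pow, div_pow, hT2]
      field_simp
      ring
    rw [h2, Real.sqrt_sq (by positivity)]
  have key : ∀ w ∈ geodesicUHP x y, Real.arsinh s₀ ≤ dist UpperHalfPlane.I w := by
    intro w hw
    rw [mem_geodesicUHP_iff] at hw
    set u := w.re with hu
    set v := w.im with hv
    have hvpos : 0 < v := w.im_pos
    have hv2 : v ^ 2 = (x - u) * (u - y) := by linear_combination hw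
    have hcoshw : Real.cosh (dist UpperHalfPlane.I w)
        = (u ^ 2 + 1 + v ^ 2) / (2 * v) := by
      rw [UpperHalfPlane.cosh_dist']
      simp only [UpperHalfPlane.I_re, UpperHalfPlane.I_im, ← hu, ← hv]
      rw [show (0 - u) ^ 2 + 1 ^ 2 + v ^ 2 = u ^ 2 + 1 + v ^ 2 by ring,
        show 2 * 1 * v = 2 * v by ring]
    have hle : Real.cosh (Real.arsinh s₀) ≤ Real.cosh (dist UpperHalfPlane.I w) := by
      rw [hcosh₀, hcoshw, div_le_div_iff₀ hxy (by positivity)]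
      have hL : u ^ 2 + 1 + v ^ 2 = 1 + u * (x + y) - x * y := by linear_combination hv2
      rw [hL]
      have hA : (0:ℝ) < (x - y) ^ 2 * (x + y) ^ 2 + 4 * ((x ^ 2 + 1) * (y ^ 2 + 1)) := by
        positivity
      have hq : 4 * ((x - y) ^ 2 * (x + y) ^ 2 + 4 * ((x ^ 2 + 1) * (y ^ 2 + 1))) *
            (((1 + u * (x + y) - x * y) * (x - y)) ^ 2
              - 4 * ((x - u) * (u - y)) * ((x ^ 2 + 1) * (y ^ 2 + 1))) =
          (2 * ((x - y) ^ 2 * (x + y) ^ 2 + 4 * ((x ^ 2 + 1) * (y ^ 2 + 1))) * u +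
            2 * (x + y) * ((x - y) ^ 2 * (1 - x * y) - 2 * ((x ^ 2 + 1) * (y ^ 2 + 1)))) ^ 2 := by
        ring
      have hq2 : 4 * ((x - u) * (u - y)) * ((x ^ 2 + 1) * (y ^ 2 + 1)) ≤
          ((1 + u * (x + y) - x * y) * (x - y)) ^ 2 := by
        nlinarith [hq, hA, sq_nonneg (2 * ((x - y) ^ 2 * (x + y) ^ 2 +
          4 * ((x ^ 2 + 1) * (y ^ 2 + 1))) * u + 2 * (x + y) *
          ((x - y) ^ 2 * (1 - x * y) - 2 * ((x ^ 2 + 1) * (y ^ 2 + 1))))]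
      have hTv : (T * (2 * v)) ^ 2
          = 4 * ((x - u) * (u - y)) * ((x ^ 2 + 1) * (y ^ 2 + 1)) := by
        rw [mul_pow T (2 * v), hT2]
        linear_combination (4 * ((x ^ 2 + 1) * (y ^ 2 + 1))) * hv2
      have hsq : (T * (2 * v)) ^ 2 ≤ ((1 + u * (x + y) - x * y) * (x - y)) ^ 2 := by
        rw [hTv]; exact hq2
      have h2v : (0:ℝ) ≤ T * (2 * v) := by positivity
      have hrhs : (0:ℝ) ≤ (1 + u * (x + y) - x * y) * (x - y) := by
        have hpos : (0:ℝ) ≤ 1 + u * (x + y) - x * y := by rw [← hL]; positivity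
        exact mul_nonneg hpos hxy.le
      exact (pow_le_pow_iff_left₀ h2v hrhs two_ne_zero).mp hsq
    have habs := Real.cosh_le_cosh.mp hle
    rwa [abs_of_nonneg hd₀, abs_of_nonneg dist_nonneg] at habs
  have hNpos : (0:ℝ) < x ^ 2 + y ^ 2 + 2 := by positivity
  have hNne : (x ^ 2 + y ^ 2 + 2 : ℝ) ≠ 0 := ne_of_gt hNpos
  set wst : UpperHalfPlane :=
    ⟨⟨(x + y) * (1 + x * y) / (x ^ 2 + y ^ 2 + 2), (x - y) * T / (x ^ 2 + y ^ 2 + 2)⟩,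
      by positivity⟩ with hwst
  have hwre : wst.re = (x + y) * (1 + x * y) / (x ^ 2 + y ^ 2 + 2) := rfl
  have hwim : wst.im = (x - y) * T / (x ^ 2 + y ^ 2 + 2) := rfl
  have e1 : ((x - y) * T / (x ^ 2 + y ^ 2 + 2)) ^ 2
      = (x - y) ^ 2 * ((x ^ 2 + 1) * (y ^ 2 + 1)) / (x ^ 2 + y ^ 2 + 2) ^ 2 := by
    rw [div_pow, mul_pow, hT2]
  have hmem : wst ∈ geodesicUHP x y := by
    rw [mem_geodesicUHP_iff, hwre, hwim, e1]
    field_simp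
    ring
  have e2 : wst.re ^ 2 + 1 + wst.im ^ 2
      = 2 * ((x ^ 2 + 1) * (y ^ 2 + 1)) / (x ^ 2 + y ^ 2 + 2) := by
    rw [hwre, hwim, e1]
    field_simp
    ring
  have hdist : dist UpperHalfPlane.I wst = Real.arsinh s₀ := by
    have himpos : 0 < wst.im := wst.im_pos
    have hcoshw : Real.cosh (dist UpperHalfPlane.I wst)
        = (wst.re ^ 2 + 1 + wst.im ^ 2) / (2 * wst.im) := by
      rw [UpperHalfPlane.cosh_dist']
      simp only [UpperHalfPlane.I_re, UpperHalfPlane.I_im]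
      rw [show (0 - wst.re) ^ 2 + 1 ^ 2 + wst.im ^ 2 = wst.re ^ 2 + 1 + wst.im ^ 2 by ring,
        show 2 * 1 * wst.im = 2 * wst.im by ring]
    have heq : Real.cosh (dist UpperHalfPlane.I wst) = Real.cosh (Real.arsinh s₀) := by
      rw [hcoshw, hcosh₀, e2, hwim]
      have hTT : T * T = (x ^ 2 + 1) * (y ^ 2 + 1) := by rw [← sq]; exact hT2
      have h2im : (0:ℝ) < 2 * ((x - y) * T / (x ^ 2 + y ^ 2 + 2)) :=
        mul_pos two_pos (div_pos (mul_pos hxy hTpos) hNpos)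
      rw [div_eq_div_iff h2im.ne' hxy.ne']
      field_simp
      linear_combination (-1) * hTT
    have h2 := Real.cosh_le_cosh.mp heq.le
    have h3 := Real.cosh_le_cosh.mp heq.ge
    have habs : |dist UpperHalfPlane.I wst| = |Real.arsinh s₀| := le_antisymm h2 h3
    rwa [abs_of_nonneg dist_nonneg, abs_of_nonneg hd₀] at habs
  have hne : (geodesicUHP x y).Nonempty := ⟨wst, hmem⟩
  refine le_antisymm ?_ ?_
  · calc D x y ≤ dist UpperHalfPlane.I wst := Metric.infDist_le_dist_of_mem hmem
      _ = _ := hdist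
  · by_contra hlt
    push_neg at hlt
    obtain ⟨w, hwmem, hwlt⟩ := (Metric.infDist_lt_iff hne).mp hlt
    exact absurd hwlt (not_lt.mpr (key w hwmem))

lemma integral_inv_sq_Ioc (x c d : ℝ) (hcd : c ≤ d) (hdx : d < x) :
    ∫ y in Set.Ioc c d, 1 / (x - y) ^ 2 = 1 / (x - d) - 1 / (x - c) := by
  rw [← intervalIntegral.integral_of_le hcd]
  have hcont : ContinuousOn (fun y : ℝ => 1 / (x - y) ^ 2) (Set.uIcc c d) := by
    apply ContinuousOn.div continuousOn_const
      ((continuous_const.sub continuous_id).pow 2).continuousOn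
    intro t ht
    rw [Set.uIcc_of_le hcd] at ht
    exact pow_ne_zero 2 (sub_ne_zero.mpr (ne_of_gt (lt_of_le_of_lt ht.2 hdx)))
  have hF : ∀ t ∈ Set.uIcc c d, HasDerivAt (fun y : ℝ => (x - y)⁻¹) (1 / (x - t) ^ 2) t := by
    intro t ht
    rw [Set.uIcc_of_le hcd] at ht
    have hne : x - t ≠ 0 := sub_ne_zero.mpr (ne_of_gt (lt_of_le_of_lt ht.2 hdx))
    have h1 : HasDerivAt (fun y : ℝ => x - y) (-1) t := (hasDerivAt_id t).const_sub x
    have h2 := h1.inv hne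
    refine h2.congr_deriv ?_
    ring
  rw [intervalIntegral.integral_eq_sub_of_hasDerivAt hF hcont.intervalIntegrable]
  simp [one_div]

lemma piece1 (s x₀ : ℝ) (hs : 0 < s) (hx₀ : 0 < x₀)
    (hneg : ∀ x ∈ Set.Ioo (0:ℝ) x₀, (s * x - 1) / (x + s) < 0) :
    ∫ p : ℝ × ℝ in {p : ℝ × ℝ | p.1 ∈ Set.Ioo (0:ℝ) x₀ ∧
        p.2 ∈ Set.Icc (-1 / p.1) ((s * p.1 - 1) / (p.1 + s))}, 1 / (p.1 - p.2) ^ 2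
      = s * Real.arctan x₀ ∧
    IntegrableOn (fun p : ℝ × ℝ => 1 / (p.1 - p.2) ^ 2) {p : ℝ × ℝ | p.1 ∈ Set.Ioo (0:ℝ) x₀ ∧
        p.2 ∈ Set.Icc (-1 / p.1) ((s * p.1 - 1) / (p.1 + s))} := by
  set f : ℝ × ℝ → ℝ := fun p => 1 / (p.1 - p.2) ^ 2 with hf_def
  set S : Set (ℝ × ℝ) := {p : ℝ × ℝ | p.1 ∈ Set.Ioo (0:ℝ) x₀ ∧
      p.2 ∈ Set.Icc (-1 / p.1) ((s * p.1 - 1) / (p.1 + s))} with hS_def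
  have hmf : Measurable f :=
    measurable_const.div ((measurable_fst.sub measurable_snd).pow_const 2)
  have hmS : MeasurableSet S := by
    have h1 : MeasurableSet {p : ℝ × ℝ | p.1 ∈ Set.Ioo (0:ℝ) x₀} :=
      measurable_fst measurableSet_Ioo
    have h2 : MeasurableSet {p : ℝ × ℝ | -1 / p.1 ≤ p.2} :=
      measurableSet_le (measurable_const.div measurable_fst) measurable_snd
    have h3 : MeasurableSet {p : ℝ × ℝ | p.2 ≤ (s * p.1 - 1) / (p.1 + s)} :=
      measurableSet_le measurable_snd
        ((measurable_fst.const_mul s |>.sub measurable_const).div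
          (measurable_fst.add_const s))
    have : S = {p : ℝ × ℝ | p.1 ∈ Set.Ioo (0:ℝ) x₀} ∩
        ({p : ℝ × ℝ | -1 / p.1 ≤ p.2} ∩ {p : ℝ × ℝ | p.2 ≤ (s * p.1 - 1) / (p.1 + s)}) := by
      ext p
      simp only [hS_def, Set.mem_setOf_eq, Set.mem_inter_iff, Set.mem_Icc]
      try tauto
    rw [this]
    exact h1.inter (h2.inter h3)
  have hfnn : ∀ p : ℝ × ℝ, 0 ≤ f p := fun p => by positivity
  -- slices
  have hslice_in : ∀ x ∈ Set.Ioo (0:ℝ) x₀, (fun y => S.indicator f (x, y))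
      = (Set.Icc (-1 / x) ((s * x - 1) / (x + s))).indicator (fun y => 1 / (x - y) ^ 2) := by
    intro x hx
    funext y
    simp only [Set.indicator_apply, hS_def, Set.mem_setOf_eq, hf_def, hx, true_and]
  have hslice_out : ∀ (x : ℝ), x ∉ Set.Ioo (0:ℝ) x₀ →
      (fun y => S.indicator f (x, y)) = fun _ => (0:ℝ) := by
    intro x hx
    funext y
    simp only [Set.indicator_apply, hS_def, Set.mem_setOf_eq, hx, false_and, if_false]
  have hval : ∀ x ∈ Set.Ioo (0:ℝ) x₀,
      ∫ y, (Set.Icc (-1 / x) ((s * x - 1) / (x + s))).indicator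
        (fun y => 1 / (x - y) ^ 2) y = s * (1 / (1 + x ^ 2)) := by
    intro x hx
    have hx0 : 0 < x := hx.1
    have hcd : -1 / x ≤ (s * x - 1) / (x + s) := by
      rw [div_le_div_iff₀ (by positivity) (by positivity)]
      nlinarith [mul_nonneg hs.le (sq_nonneg x)]
    have hdx : (s * x - 1) / (x + s) < x := lt_trans (hneg x hx) hx0
    rw [integral_indicator measurableSet_Icc, integral_Icc_eq_integral_Ioc,
      integral_inv_sq_Ioc x _ _ hcd hdx]
    have h1 : x - (s * x - 1) / (x + s) = (x ^ 2 + 1) / (x + s) := by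
      field_simp
      ring
    have h2 : x - -1 / x = (x ^ 2 + 1) / x := by
      field_simp
      ring
    rw [h1, h2, one_div_div, one_div_div, div_sub_div_same,
      show x + s - x = s by ring, show (1:ℝ) + x ^ 2 = x ^ 2 + 1 by ring, mul_one_div]
  have hIy : ∀ x : ℝ, Integrable (fun y => S.indicator f (x, y)) := by
    intro x
    by_cases hx : x ∈ Set.Ioo (0:ℝ) x₀
    · rw [hslice_in x hx]
      rw [integrable_indicator_iff measurableSet_Icc]
      have hdx : (s * x - 1) / (x + s) < x := lt_trans (hneg x hx) hx.1
      apply ContinuousOn.integrableOn_Icc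
      apply ContinuousOn.div continuousOn_const
        ((continuous_const.sub continuous_id).pow 2).continuousOn
      intro t ht
      exact pow_ne_zero 2 (sub_ne_zero.mpr (ne_of_gt (lt_of_le_of_lt ht.2 hdx)))
    · rw [hslice_out x hx]
      exact integrable_zero _ _ _
  have hres : (fun x => ∫ y, S.indicator f (x, y))
      = (Set.Ioo (0:ℝ) x₀).indicator (fun x => s * (1 / (1 + x ^ 2))) := by
    funext x
    by_cases hx : x ∈ Set.Ioo (0:ℝ) x₀
    · rw [hslice_in x hx, Set.indicator_of_mem hx, hval x hx]
    · rw [hslice_out x hx, Set.indicator_of_notMem hx]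
      simp
  have hnorm : (fun x => ∫ y, ‖S.indicator f (x, y)‖)
      = (Set.Ioo (0:ℝ) x₀).indicator (fun x => s * (1 / (1 + x ^ 2))) := by
    rw [← hres]
    funext x
    congr 1
    funext y
    exact Real.norm_of_nonneg (Set.indicator_nonneg (fun p _ => hfnn p) _)
  have hIndInt : Integrable ((Set.Ioo (0:ℝ) x₀).indicator (fun x => s * (1 / (1 + x ^ 2)))) := by
    rw [integrable_indicator_iff measurableSet_Ioo]
    have hc : Continuous fun x : ℝ => s * (1 / (1 + x ^ 2)) := by
      apply continuous_const.mul
      apply continuous_const.div (by continuity)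
      intro x
      positivity
    exact (hc.integrableOn_Icc).mono_set Set.Ioo_subset_Icc_self
  have hInt : Integrable (S.indicator f) := by
    rw [Measure.volume_eq_prod ℝ ℝ]
    refine (integrable_prod_iff ?_).mpr ⟨ae_of_all _ hIy, ?_⟩
    · exact (hmf.indicator hmS).aestronglyMeasurable
    · rw [hnorm]
      exact hIndInt
  refine ⟨?_, (integrable_indicator_iff hmS).mp hInt⟩
  calc ∫ p in S, f p = ∫ p, S.indicator f p := by rw [integral_indicator hmS]
    _ = ∫ x, ∫ y, S.indicator f (x, y) := by
        rw [Measure.volume_eq_prod ℝ ℝ] at hInt ⊢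
        exact integral_prod _ hInt
    _ = ∫ x, (Set.Ioo (0:ℝ) x₀).indicator (fun x => s * (1 / (1 + x ^ 2))) x := by rw [hres]
    _ = ∫ x in Set.Ioo (0:ℝ) x₀, s * (1 / (1 + x ^ 2)) := integral_indicator measurableSet_Ioo
    _ = ∫ x in (0:ℝ)..x₀, s * (1 / (1 + x ^ 2)) := by
        rw [intervalIntegral.integral_of_le hx₀.le, integral_Ioc_eq_integral_Ioo]
    _ = s * Real.arctan x₀ := by
        rw [intervalIntegral.integral_const_mul, integral_one_div_one_add_sq,
          Real.arctan_zero, sub_zero]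

lemma piece2 (a x₀ : ℝ) (hx₀ : 0 < x₀) (hx₀a : x₀ ≤ a) (ha1 : a ≤ 1) :
    ∫ p : ℝ × ℝ in {p : ℝ × ℝ | p.1 ∈ Set.Ico x₀ a ∧ p.2 ∈ Set.Ico (-1 / p.1) (-a)},
        1 / (p.1 - p.2) ^ 2
      = (Real.log (a + a) - Real.log (x₀ + a)) -
        (Real.log (a ^ 2 + 1) - Real.log (x₀ ^ 2 + 1)) / 2 ∧
    IntegrableOn (fun p : ℝ × ℝ => 1 / (p.1 - p.2) ^ 2)
      {p : ℝ × ℝ | p.1 ∈ Set.Ico x₀ a ∧ p.2 ∈ Set.Ico (-1 / p.1) (-a)} := by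
  have ha : 0 < a := lt_of_lt_of_le hx₀ hx₀a
  set f : ℝ × ℝ → ℝ := fun p => 1 / (p.1 - p.2) ^ 2 with hf_def
  set g : ℝ → ℝ := fun x => 1 / (x + a) - x / (x ^ 2 + 1) with hg_def
  set S : Set (ℝ × ℝ) := {p : ℝ × ℝ | p.1 ∈ Set.Ico x₀ a ∧ p.2 ∈ Set.Ico (-1 / p.1) (-a)}
    with hS_def
  have hmf : Measurable f :=
    measurable_const.div ((measurable_fst.sub measurable_snd).pow_const 2)
  have hmS : MeasurableSet S := by
    have h1 : MeasurableSet {p : ℝ × ℝ | p.1 ∈ Set.Ico x₀ a} :=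
      measurable_fst measurableSet_Ico
    have h2 : MeasurableSet {p : ℝ × ℝ | -1 / p.1 ≤ p.2} :=
      measurableSet_le (measurable_const.div measurable_fst) measurable_snd
    have h3 : MeasurableSet {p : ℝ × ℝ | p.2 < -a} :=
      measurableSet_lt measurable_snd measurable_const
    have : S = {p : ℝ × ℝ | p.1 ∈ Set.Ico x₀ a} ∩
        ({p : ℝ × ℝ | -1 / p.1 ≤ p.2} ∩ {p : ℝ × ℝ | p.2 < -a}) := by
      ext p
      simp only [hS_def, Set.mem_setOf_eq, Set.mem_inter_iff, Set.mem_Ico]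
      try tauto
    rw [this]
    exact h1.inter (h2.inter h3)
  have hfnn : ∀ p : ℝ × ℝ, 0 ≤ f p := fun p => by positivity
  have hslice_in : ∀ x ∈ Set.Ico x₀ a, (fun y => S.indicator f (x, y))
      = (Set.Ico (-1 / x) (-a)).indicator (fun y => 1 / (x - y) ^ 2) := by
    intro x hx
    funext y
    simp only [Set.indicator_apply, hS_def, Set.mem_setOf_eq, hf_def, hx, true_and]
  have hslice_out : ∀ (x : ℝ), x ∉ Set.Ico x₀ a →
      (fun y => S.indicator f (x, y)) = fun _ => (0:ℝ) := by
    intro x hx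
    funext y
    simp only [Set.indicator_apply, hS_def, Set.mem_setOf_eq, hx, false_and, if_false]
  have hval : ∀ x ∈ Set.Ico x₀ a,
      ∫ y, (Set.Ico (-1 / x) (-a)).indicator (fun y => 1 / (x - y) ^ 2) y = g x := by
    intro x hx
    have hx0 : 0 < x := lt_of_lt_of_le hx₀ hx.1
    have hcd : -1 / x ≤ -a := by
      rw [div_le_iff₀ hx0]
      nlinarith [hx.2]
    have hdx : -a < x := by linarith
    rw [integral_indicator measurableSet_Ico, integral_Ico_eq_integral_Ioo,
      ← integral_Ioc_eq_integral_Ioo, integral_inv_sq_Ioc x _ _ hcd hdx]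
    have h1 : x - -a = x + a := by ring
    have h2 : x - -1 / x = (x ^ 2 + 1) / x := by
      field_simp
      ring
    rw [h1, h2, one_div_div, hg_def]
  have hIy : ∀ x : ℝ, Integrable (fun y => S.indicator f (x, y)) := by
    intro x
    by_cases hx : x ∈ Set.Ico x₀ a
    · rw [hslice_in x hx]
      rw [integrable_indicator_iff measurableSet_Ico]
      have hx0 : 0 < x := lt_of_lt_of_le hx₀ hx.1
      apply IntegrableOn.mono_set _ Set.Ico_subset_Icc_self
      apply ContinuousOn.integrableOn_Icc
      apply ContinuousOn.div continuousOn_const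
        ((continuous_const.sub continuous_id).pow 2).continuousOn
      intro t ht
      exact pow_ne_zero 2 (sub_ne_zero.mpr (ne_of_gt (lt_of_le_of_lt ht.2 (by linarith))))
    · rw [hslice_out x hx]
      exact integrable_zero _ _ _
  have hres : (fun x => ∫ y, S.indicator f (x, y))
      = (Set.Ico x₀ a).indicator g := by
    funext x
    by_cases hx : x ∈ Set.Ico x₀ a
    · rw [hslice_in x hx, Set.indicator_of_mem hx, hval x hx]
    · rw [hslice_out x hx, Set.indicator_of_notMem hx]
      simp
  have hnorm : (fun x => ∫ y, ‖S.indicator f (x, y)‖)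
      = (Set.Ico x₀ a).indicator g := by
    rw [← hres]
    funext x
    congr 1
    funext y
    exact Real.norm_of_nonneg (Set.indicator_nonneg (fun p _ => hfnn p) _)
  have hgcont : ContinuousOn g (Set.Icc x₀ a) := by
    apply ContinuousOn.sub
    · apply ContinuousOn.div continuousOn_const
        ((continuous_id.add continuous_const)).continuousOn
      intro t ht
      show t + a ≠ 0
      exact ne_of_gt (by linarith [ht.1])
    · apply ContinuousOn.div continuous_id.continuousOn
        ((continuous_pow 2).add continuous_const).continuousOn
      intro t _
      show t ^ 2 + 1 ≠ 0
      positivity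
  have hIndInt : Integrable ((Set.Ico x₀ a).indicator g) := by
    rw [integrable_indicator_iff measurableSet_Ico]
    exact (hgcont.integrableOn_Icc).mono_set Set.Ico_subset_Icc_self
  have hInt : Integrable (S.indicator f) := by
    rw [Measure.volume_eq_prod ℝ ℝ]
    refine (integrable_prod_iff ?_).mpr ⟨ae_of_all _ hIy, ?_⟩
    · exact (hmf.indicator hmS).aestronglyMeasurable
    · rw [hnorm]
      exact hIndInt
  have houter : ∫ x in x₀..a, g x
      = (Real.log (a + a) - Real.log (x₀ + a)) -
        (Real.log (a ^ 2 + 1) - Real.log (x₀ ^ 2 + 1)) / 2 := by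
    have hF : ∀ t ∈ Set.uIcc x₀ a, HasDerivAt
        (fun u => Real.log (u + a) - Real.log (u ^ 2 + 1) / 2) (g t) t := by
      intro t ht
      rw [Set.uIcc_of_le hx₀a] at ht
      have ht0 : 0 < t := lt_of_lt_of_le hx₀ ht.1
      have hd1 : HasDerivAt (fun u : ℝ => Real.log (u + a)) (1 / (t + a)) t :=
        ((hasDerivAt_id t).add_const a).log (by positivity)
      have hd2 : HasDerivAt (fun u : ℝ => Real.log (u ^ 2 + 1))
          ((2 * t ^ 1) / (t ^ 2 + 1)) t := by
        have hp : HasDerivAt (fun u : ℝ => u ^ 2 + 1) ((2:ℕ) * t ^ 1) t :=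
          (hasDerivAt_pow 2 t).add_const 1
        have h := hp.log (by positivity)
        norm_num at h ⊢
        exact h
      have := hd1.sub (hd2.div_const 2)
      refine this.congr_deriv ?_
      rw [hg_def]
      have h1 : t ^ 2 + 1 ≠ 0 := by positivity
      field_simp
    have hcont2 : ContinuousOn g (Set.uIcc x₀ a) := by
      rw [Set.uIcc_of_le hx₀a]
      exact hgcont
    rw [intervalIntegral.integral_eq_sub_of_hasDerivAt hF hcont2.intervalIntegrable]
    ring
  refine ⟨?_, (integrable_indicator_iff hmS).mp hInt⟩
  calc ∫ p in S, f p = ∫ p, S.indicator f p := by rw [integral_indicator hmS]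
    _ = ∫ x, ∫ y, S.indicator f (x, y) := by
        rw [Measure.volume_eq_prod ℝ ℝ] at hInt ⊢
        exact integral_prod _ hInt
    _ = ∫ x, (Set.Ico x₀ a).indicator g x := by rw [hres]
    _ = ∫ x in Set.Ico x₀ a, g x := integral_indicator measurableSet_Ico
    _ = ∫ x in x₀..a, g x := by
        rw [intervalIntegral.integral_of_le hx₀a, integral_Ico_eq_integral_Ioo,
          integral_Ioc_eq_integral_Ioo]
    _ = _ := houter

/-- For `k ≥ 4` and `δ_k < z < r_k`, the integral of `(x-y)⁻²` over the region of pairs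
`(x,y)` with `0 < x < tan (π/k)`, `-1/x ≤ y < -tan (π/k)` and `D x y ≤ z` equals
`sinh z · arctan (φ_k (sinh z)) + log (2 cosh z · sin (π/k) · cos (π/k))`, where
`φ_k t = (1 - t tan (π/k)) / (t + tan (π/k))`. -/
theorem LambdaStar_middle (k : ℕ) (hk : 4 ≤ k) (z : ℝ)
    (hz1 : Real.arsinh (Real.cot (2 * π / k)) < z)
    (hz2 : z < Real.arsinh (Real.cot (π / k))) :
    ∫ p : ℝ × ℝ in {p : ℝ × ℝ | 0 < p.1 ∧ p.1 < Real.tan (π / k) ∧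
        -1 / p.1 ≤ p.2 ∧ p.2 < -Real.tan (π / k) ∧ D p.1 p.2 ≤ z},
        1 / (p.1 - p.2) ^ 2 =
      Real.sinh z *
          Real.arctan ((1 - Real.sinh z * Real.tan (π / k)) /
            (Real.sinh z + Real.tan (π / k))) +
        Real.log (2 * Real.cosh z * Real.sin (π / k) * Real.cos (π / k)) := by
  have hkR : (4:ℝ) ≤ (k:ℝ) := by exact_mod_cast hk
  have hk0 : (0:ℝ) < (k:ℝ) := by linarith
  set θ : ℝ := π / k with hθ_def
  have hθpos : 0 < θ := div_pos pi_pos hk0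
  have hθle : θ ≤ π / 4 := by
    rw [hθ_def]
    exact div_le_div_of_nonneg_left pi_pos.le (by norm_num) hkR
  have hθlt : θ < π / 2 := lt_of_le_of_lt hθle (by linarith [pi_pos])
  have hcos : 0 < Real.cos θ := Real.cos_pos_of_mem_Ioo ⟨by linarith, hθlt⟩
  have hsin : 0 < Real.sin θ := Real.sin_pos_of_pos_of_lt_pi hθpos (by nlinarith [pi_pos])
  set a : ℝ := Real.tan θ with ha_def
  have ha : 0 < a := Real.tan_pos_of_pos_of_lt_pi_div_two hθpos hθlt
  have ha_eq : a = Real.sin θ / Real.cos θ := Real.tan_eq_sin_div_cos θ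
  have ha1 : a ≤ 1 := by
    rw [ha_def, ← Real.tan_pi_div_four]
    refine Real.strictMonoOn_tan.monotoneOn ⟨by linarith, hθlt⟩
      ⟨by linarith [pi_pos], by linarith [pi_pos]⟩ hθle
  have hsinne := hsin.ne'
  have hcosne := hcos.ne'
  have hcot1 : Real.cot θ = 1 / a := by
    rw [Real.cot_eq_cos_div_sin, ha_eq, one_div_div]
  have hcot2 : Real.cot (2 * π / k) = (1 - a ^ 2) / (2 * a) := by
    have h2θ : 2 * π / (k:ℝ) = 2 * θ := by rw [hθ_def]; ring
    rw [h2θ, Real.cot_eq_cos_div_sin, Real.cos_two_mul, Real.sin_two_mul, ha_eq]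
    field_simp
    linear_combination Real.sin_sq_add_cos_sq θ
  set s : ℝ := Real.sinh z with hs_def
  have hs2 : (1 - a ^ 2) / (2 * a) < s := by
    have h := Real.sinh_lt_sinh.mpr hz1
    rwa [Real.sinh_arsinh, hcot2] at h
  have hs3 : s < 1 / a := by
    have h := Real.sinh_lt_sinh.mpr hz2
    rwa [Real.sinh_arsinh, hcot1] at h
  have hs0 : 0 < s := by
    refine lt_of_le_of_lt (div_nonneg (by nlinarith) (by linarith)) hs2
  have has1 : s * a < 1 := (lt_div_iff₀ ha).mp hs3
  have hs2' : 1 - a ^ 2 < 2 * a * s := by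
    rw [div_lt_iff₀ (by linarith : (0:ℝ) < 2 * a)] at hs2
    linarith
  set x₀ : ℝ := (1 - s * a) / (s + a) with hx₀_def
  have hsa : 0 < s + a := by linarith
  have hx₀pos : 0 < x₀ := div_pos (by linarith) hsa
  have hx₀lt : x₀ < a := by
    rw [hx₀_def, div_lt_iff₀ hsa]
    nlinarith [hs2']
  have hBlt : ∀ x : ℝ, 0 < x → x < x₀ → (s * x - 1) / (x + s) < -a := by
    intro x hx0 hxx
    rw [div_lt_iff₀ (by linarith)]
    have h := (lt_div_iff₀ hsa).mp (hxx.trans_eq hx₀_def)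
    nlinarith
  have hBge : ∀ x : ℝ, x₀ ≤ x → -a ≤ (s * x - 1) / (x + s) := by
    intro x hxx
    have hx0 : 0 < x := lt_of_lt_of_le hx₀pos hxx
    rw [le_div_iff₀ (by linarith)]
    have h := (div_le_iff₀ hsa).mp (hx₀_def ▸ hxx)
    nlinarith
  have hneg : ∀ x ∈ Set.Ioo (0:ℝ) x₀, (s * x - 1) / (x + s) < 0 := by
    intro x hx
    exact lt_trans (hBlt x hx.1 hx.2) (by linarith)
  -- region splitting
  have hseteq : {p : ℝ × ℝ | 0 < p.1 ∧ p.1 < a ∧ -1 / p.1 ≤ p.2 ∧ p.2 < -a ∧ D p.1 p.2 ≤ z}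
      = {p : ℝ × ℝ | p.1 ∈ Set.Ioo (0:ℝ) x₀ ∧
          p.2 ∈ Set.Icc (-1 / p.1) ((s * p.1 - 1) / (p.1 + s))} ∪
        {p : ℝ × ℝ | p.1 ∈ Set.Ico x₀ a ∧ p.2 ∈ Set.Ico (-1 / p.1) (-a)} := by
    ext ⟨x, y⟩
    simp only [Set.mem_setOf_eq, Set.mem_union, Set.mem_Ioo, Set.mem_Ico, Set.mem_Icc]
    have hz_eq : z = Real.arsinh s := (Real.arsinh_sinh z).symm
    constructor
    · rintro ⟨hx0, hxa, hyx, hya, hD⟩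
      have hy0 : y < 0 := lt_trans hya (by linarith)
      have hxyd : 0 < x - y := by linarith
      have h1xy : 0 ≤ 1 + x * y := by
        have h := (div_le_iff₀ hx0).mp hyx
        nlinarith
      rw [D_eq x y hx0 hy0 h1xy, hz_eq, Real.arsinh_le_arsinh] at hD
      have hDs := (div_le_iff₀ hxyd).mp hD
      have hyB : y ≤ (s * x - 1) / (x + s) := by
        rw [le_div_iff₀ (by linarith)]
        nlinarith
      by_cases hxx : x < x₀
      · exact Or.inl ⟨⟨hx0, hxx⟩, hyx, hyB⟩
      · exact Or.inr ⟨⟨not_lt.mp hxx, hxa⟩, hyx, hya⟩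
    · rintro (⟨⟨hx0, hxx⟩, hyx, hyB⟩ | ⟨⟨hxx, hxa⟩, hyx, hya⟩)
      · have hya : y < -a := lt_of_le_of_lt hyB (hBlt x hx0 hxx)
        have hy0 : y < 0 := lt_trans hya (by linarith)
        have hxyd : 0 < x - y := by linarith
        have h1xy : 0 ≤ 1 + x * y := by
          have h := (div_le_iff₀ hx0).mp hyx
          nlinarith
        have hyB2 := (le_div_iff₀ (by linarith : (0:ℝ) < x + s)).mp hyB
        refine ⟨hx0, lt_trans hxx hx₀lt, hyx, hya, ?_⟩
        rw [D_eq x y hx0 hy0 h1xy, hz_eq, Real.arsinh_le_arsinh, div_le_iff₀ hxyd]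
        nlinarith
      · have hx0 : 0 < x := lt_of_lt_of_le hx₀pos hxx
        have hy0 : y < 0 := lt_trans hya (by linarith)
        have hxyd : 0 < x - y := by linarith
        have h1xy : 0 ≤ 1 + x * y := by
          have h := (div_le_iff₀ hx0).mp hyx
          nlinarith
        have hyB : y ≤ (s * x - 1) / (x + s) := le_of_lt (lt_of_lt_of_le hya (hBge x hxx))
        have hyB2 := (le_div_iff₀ (by linarith : (0:ℝ) < x + s)).mp hyB
        refine ⟨hx0, hxa, hyx, hya, ?_⟩
        rw [D_eq x y hx0 hy0 h1xy, hz_eq, Real.arsinh_le_arsinh, div_le_iff₀ hxyd]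
        nlinarith
  have hp1 := piece1 s x₀ hs0 hx₀pos hneg
  have hp2 := piece2 a x₀ hx₀pos hx₀lt.le ha1
  have hdisj : Disjoint
      {p : ℝ × ℝ | p.1 ∈ Set.Ioo (0:ℝ) x₀ ∧
          p.2 ∈ Set.Icc (-1 / p.1) ((s * p.1 - 1) / (p.1 + s))}
      {p : ℝ × ℝ | p.1 ∈ Set.Ico x₀ a ∧ p.2 ∈ Set.Ico (-1 / p.1) (-a)} := by
    rw [Set.disjoint_left]
    rintro p ⟨hp1', _⟩ ⟨hp2', _⟩
    exact absurd hp1'.2 (not_lt.mpr hp2'.1)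
  have hmS2 : MeasurableSet
      {p : ℝ × ℝ | p.1 ∈ Set.Ico x₀ a ∧ p.2 ∈ Set.Ico (-1 / p.1) (-a)} := by
    have h1 : MeasurableSet {p : ℝ × ℝ | p.1 ∈ Set.Ico x₀ a} :=
      measurable_fst measurableSet_Ico
    have h2 : MeasurableSet {p : ℝ × ℝ | -1 / p.1 ≤ p.2} :=
      measurableSet_le (measurable_const.div measurable_fst) measurable_snd
    have h3 : MeasurableSet {p : ℝ × ℝ | p.2 < -a} :=
      measurableSet_lt measurable_snd measurable_const
    have he : {p : ℝ × ℝ | p.1 ∈ Set.Ico x₀ a ∧ p.2 ∈ Set.Ico (-1 / p.1) (-a)}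
        = {p : ℝ × ℝ | p.1 ∈ Set.Ico x₀ a} ∩
          ({p : ℝ × ℝ | -1 / p.1 ≤ p.2} ∩ {p : ℝ × ℝ | p.2 < -a}) := by
      ext p
      simp only [Set.mem_setOf_eq, Set.mem_inter_iff, Set.mem_Ico]
      try tauto
    rw [he]
    exact h1.inter (h2.inter h3)
  rw [hseteq, setIntegral_union hdisj hmS2 hp1.2 hp2.2, hp1.1, hp2.1]
  -- final algebra
  have hc : 0 < Real.cosh z := Real.cosh_pos z
  have hc2 : Real.cosh z ^ 2 = 1 + s ^ 2 := by
    rw [Real.cosh_sq', hs_def]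
  have hA : x₀ + a = (1 + a ^ 2) / (s + a) := by
    rw [hx₀_def]
    field_simp
    ring
  have hB : x₀ ^ 2 + 1 = ((1 + a ^ 2) * Real.cosh z ^ 2) / (s + a) ^ 2 := by
    rw [hx₀_def, hc2]
    field_simp
    ring
  have hx₀a_pos : 0 < x₀ + a := by linarith
  have hlog1 : Real.log (x₀ + a) = Real.log (1 + a ^ 2) - Real.log (s + a) := by
    rw [hA, Real.log_div (by positivity) (by positivity)]
  have hlog2 : Real.log (x₀ ^ 2 + 1)
      = Real.log (1 + a ^ 2) + 2 * Real.log (Real.cosh z) - 2 * Real.log (s + a) := by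
    rw [hB, Real.log_div (by positivity) (by positivity),
      Real.log_mul (by positivity) (by positivity), Real.log_pow, Real.log_pow]
    push_cast
    ring
  have hrhs_val : 2 * Real.cosh z * Real.sin θ * Real.cos θ
      = ((a + a) * Real.cosh z) / (1 + a ^ 2) := by
    rw [ha_eq]
    field_simp
    linear_combination 2 * Real.sin_sq_add_cos_sq θ
  have hlog3 : Real.log (2 * Real.cosh z * Real.sin θ * Real.cos θ)
      = Real.log (a + a) + Real.log (Real.cosh z) - Real.log (1 + a ^ 2) := by
    rw [hrhs_val, Real.log_div (by positivity) (by positivity),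
      Real.log_mul (by positivity) (by positivity)]
  have hlog4 : Real.log (a ^ 2 + 1) = Real.log (1 + a ^ 2) := by rw [add_comm]
  rw [hlog3, hlog4, hlog1, hlog2]
  ring
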